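/- Let Q be an n-translation quiver with translation τ, let Λ = k(Q), and for each i ∈ Q₀∖𝒫 fix a bound path p_i of length n+1 from τi to i. Then for any i, j ∈ Q₀∖𝒫 there is an isomorphism of vector spaces τ(i,j): e_j kQ₁ e_i → e_{τj} kQ₁ e_{τi} such that for any path p of length n and any arrow α ∈ e_j kQ₁ e_i satisfying αp = p_j in Λ, one has p·τ(i,j)(α) = p_i in Λ. -/

import Mathlib

/-!
Composition in `Λ` gives two pairings on the space `M` spanned by the paths of length `n` from
`τ j` to `i`: `(α, m) ↦ α m`, with values in `e_j Λ_{n+1} e_{τj}`, and `(m, β) ↦ m β`, with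
values in `e_i Λ_{n+1} e_{τi}`. By condition (2) both targets are lines, spanned by `p_j` and
`p_i`, so after taking coordinates both pairings are `k`-valued. Conditions (3) and (4), applied
to arrows and to elements of `M`, make both pairings nondegenerate. Hence both arrow spaces are
identified with the dual of `M` (a finite-dimensional subspace of a dual space is its own double
annihilator), and `τ(i,j)` is the composite identification: it matches the `p_j`-coordinate of
`α m` with the `p_i`-coordinate of `m τ(i,j)(α)`.
-/

namespace NTranslation

/-- Paths in a quiver with vertex set `V` and arrow spaces `Arr i j`. -/
inductive PathIn {V : Type} (Arr : V → V → Type) : V → V → Type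
  | nil (i : V) : PathIn Arr i i
  | cons {i j l : V} (p : PathIn Arr i j) (a : Arr j l) : PathIn Arr i l

namespace PathIn

variable {V : Type} {Arr : V → V → Type}

/-- The length of a path. -/
def length : ∀ {i j : V}, PathIn Arr i j → ℕ
  | _, _, .nil _ => 0
  | _, _, .cons p _ => p.length + 1

/-- Composition of paths (`p.comp q` is `p` followed by `q`). -/
def comp : ∀ {i j l : V}, PathIn Arr i j → PathIn Arr j l → PathIn Arr i l
  | _, _, _, p, .nil _ => p
  | _, _, _, p, .cons q a => .cons (p.comp q) a

/-- The set of vertices visited by a path (including both end points). -/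
def mentions : ∀ {i j : V}, PathIn Arr i j → V → Prop
  | i, _, .nil _, v => v = i
  | _, _, .cons (l := l) p _, v => p.mentions v ∨ v = l

/-- Relabel the arrows of a path along a map of arrow families. -/
def mapArr {Arr' : V → V → Type} (φ : ∀ a b : V, Arr a b → Arr' a b) :
    ∀ {i j : V}, PathIn Arr i j → PathIn Arr' i j
  | _, _, .nil i => .nil i
  | _, _, .cons (j := a) (l := b) p x => .cons (p.mapArr φ) (φ a b x)

end PathIn

section PathPresentation

variable (k : Type) [Field k]
variable (V : Type) (Arr : V → V → Type)
variable (A : Type) [Ring A] [Algebra k A]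
variable (e : V → A) (arr : ∀ i j, Arr i j → A)

/-- Evaluation of a path in the algebra `A` (arrows composed left of earlier
arrows; a trivial path evaluates to the corresponding idempotent). -/
noncomputable def evalPath : ∀ {i j : V}, PathIn Arr i j → A
  | _, _, .nil i => e i
  | _, _, .cons (j := j) (l := l) p a => arr j l a * evalPath p

/-- A formal `k`-linear combination of paths from `i` to `j`. -/
abbrev Comb (i j : V) := PathIn Arr i j →₀ k

/-- Evaluation of a formal linear combination of paths in `A`. -/
noncomputable def evalComb {i j : V} (u : Comb k V Arr i j) : A :=
  u.sum fun p c => c • evalPath V Arr A e arr p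

/-- Evaluation of a formal linear combination of arrows in `A`. -/
noncomputable def evalArrComb {i j : V} (u : Arr i j →₀ k) : A :=
  u.sum fun a c => c • arr i j a

/-- `u` is a homogeneous combination of paths of length `t` from `i` to `j`
which is a *bound element*, i.e. has nonzero image in the algebra. -/
noncomputable def IsBoundElement {i j : V} (u : Comb k V Arr i j) (t : ℕ) : Prop :=
  (∀ p ∈ u.support, PathIn.length p = t) ∧ evalComb k V Arr A e arr u ≠ 0

/-- The span of the images of the paths of length `t` in `A`. -/
noncomputable def pathDegSpan (t : ℕ) : Submodule k A :=
  Submodule.span k {x : A |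
    ∃ (i j : V) (p : PathIn Arr i j), p.length = t ∧ evalPath V Arr A e arr p = x}

/-- The span of the images of the paths of length `t` from `j` to `i`
(the corner space `e_i Λ_t e_j`). -/
noncomputable def pathCornerSpan (i j : V) (t : ℕ) : Submodule k A :=
  Submodule.span k {x : A |
    ∃ p : PathIn Arr j i, p.length = t ∧ evalPath V Arr A e arr p = x}

/-- The `(i,j)`-component of the two-sided ideal of the path algebra generated
by the relation set `ρ`, described as the span of the relations composed with
paths on both sides. -/
noncomputable def extendedRelations (ρ : ∀ i j : V, Set (Comb k V Arr i j))
    (i j : V) : Submodule k (Comb k V Arr i j) :=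
  Submodule.span k {z : Comb k V Arr i j |
    ∃ (a b : V) (r : Comb k V Arr a b) (_ : r ∈ ρ a b)
      (v : PathIn Arr i a) (w : PathIn Arr b j),
      z = Finsupp.mapDomain (fun p => (v.comp p).comp w) r}

/-- `(A, e, arr)` realizes the bound quiver algebra `k(Q) = kQ/(ρ)` of the
bound quiver `Q = (V, Arr, ρ)` with homogeneous relations. -/
structure IsBoundQuiverAlgebra (ρ : ∀ i j : V, Set (Comb k V Arr i j)) : Prop where
  idem : ∀ i, e i * e i = e i
  orth : ∀ i j, i ≠ j → e i * e j = 0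
  e_ne : ∀ i, e i ≠ 0
  arr_comp : ∀ (i j : V) (a : Arr i j), e j * arr i j a * e i = arr i j a
  locFin : ∀ i j : V, Finite (Arr i j)
  spanning : pathDegSpan k V Arr A e arr 0 = Submodule.span k (Set.range e)
  graded : DirectSum.IsInternal (pathDegSpan k V Arr A e arr)
  homog : ∀ (i j : V), ∀ r ∈ ρ i j,
    ∃ t : ℕ, 2 ≤ t ∧ ∀ p ∈ r.support, PathIn.length p = t
  kernel : ∀ (i j : V) (u : Comb k V Arr i j),
    evalComb k V Arr A e arr u = 0 ↔ u ∈ extendedRelations k V Arr ρ i j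

/-- The bound quiver `(V, Arr, ρ)`, realized by the algebra `(A, e, arr)`,
together with `(𝒫, ℐ, τ)`, is an `n`-translation quiver. -/
structure IsNTranslationQuiver (n : ℕ) (P I : Set V) (τ : V → V) : Prop where
  bij : Set.BijOn τ Pᶜ Iᶜ
  /- (1a): for each non-projective `i` there is a bound path of length `n+1`
  from `τ i` to `i`. -/
  exists_max : ∀ i ∉ P, ∃ p : PathIn Arr (τ i) i,
    p.length = n + 1 ∧ evalPath V Arr A e arr p ≠ 0
  /- (1b): every maximal bound path has length `n+1` and runs from `τ i` to `i`
  for some non-projective `i`. -/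
  max_bound : ∀ (a b : V) (p : PathIn Arr a b), evalPath V Arr A e arr p ≠ 0 →
    (∀ (c : V) (α : Arr b c), arr b c α * evalPath V Arr A e arr p = 0) →
    (∀ (c : V) (α : Arr c a), evalPath V Arr A e arr p * arr c a α = 0) →
    ∃ i, i ∉ P ∧ a = τ i ∧ b = i ∧ p.length = n + 1
  /- (2): two bound paths of length `n+1` from `τ i` to `i` are linearly
  dependent. -/
  lin_dep : ∀ i ∉ P, ∀ (p q : PathIn Arr (τ i) i),
    p.length = n + 1 → q.length = n + 1 →
    ∃ c d : k, ¬ (c = 0 ∧ d = 0) ∧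
      c • evalPath V Arr A e arr p + d • evalPath V Arr A e arr q = 0
  /- (3) -/
  cond3 : ∀ i ∉ P, ∀ (j : V) (t : ℕ), t ≤ n + 1 →
    ∀ u : Comb k V Arr j i, IsBoundElement k V Arr A e arr u t →
      ∃ q : PathIn Arr (τ i) j, q.length + t = n + 1 ∧
        evalComb k V Arr A e arr u * evalPath V Arr A e arr q ≠ 0
  /- (4) -/
  cond4 : ∀ i ∉ I, ∀ (j : V) (t : ℕ), t ≤ n + 1 →
    ∀ u : Comb k V Arr i j, IsBoundElement k V Arr A e arr u t →
      ∃ i', i' ∉ P ∧ τ i' = i ∧ ∃ p : PathIn Arr j i', p.length + t = n + 1 ∧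
        evalPath V Arr A e arr p * evalComb k V Arr A e arr u ≠ 0

end PathPresentation
end NTranslation

open Module

theorem Module.Dual.range_eq_of_forall_apply_eq_zero_iff {k F₁ F₂ M : Type*} [Field k]
    [AddCommGroup F₁] [Module k F₁] [AddCommGroup F₂] [Module k F₂]
    [AddCommGroup M] [Module k M] [FiniteDimensional k F₁] [FiniteDimensional k F₂]
    (B₁ : F₁ →ₗ[k] Dual k M) (B₂ : F₂ →ₗ[k] Dual k M)
    (h : ∀ m, (∀ α, B₁ α m = 0) ↔ ∀ β, B₂ β m = 0) :
    LinearMap.range B₁ = LinearMap.range B₂ := by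
  have hco : (LinearMap.range B₁).dualCoannihilator =
      (LinearMap.range B₂).dualCoannihilator := by
    ext m
    simpa only [Submodule.mem_dualCoannihilator, LinearMap.mem_range, forall_exists_index,
      forall_apply_eq_imp_iff] using h m
  rw [← Subspace.dualCoannihilator_dualAnnihilator_eq (W := LinearMap.range B₁), hco,
    Subspace.dualCoannihilator_dualAnnihilator_eq]

theorem Module.Dual.exists_linearEquiv_of_injective_of_forall_apply_eq_zero_iff
    {k F₁ F₂ M : Type*} [Field k]
    [AddCommGroup F₁] [Module k F₁] [AddCommGroup F₂] [Module k F₂]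
    [AddCommGroup M] [Module k M] [FiniteDimensional k F₁] [FiniteDimensional k F₂]
    (B₁ : F₁ →ₗ[k] Dual k M) (B₂ : F₂ →ₗ[k] Dual k M)
    (h₁ : Function.Injective B₁) (h₂ : Function.Injective B₂)
    (h : ∀ m, (∀ α, B₁ α m = 0) ↔ ∀ β, B₂ β m = 0) :
    ∃ T : F₁ ≃ₗ[k] F₂, ∀ α, B₂ (T α) = B₁ α :=
  ⟨(LinearEquiv.ofInjective B₁ h₁).trans ((LinearEquiv.ofEq _ _
      (range_eq_of_forall_apply_eq_zero_iff B₁ B₂ h)).trans (LinearEquiv.ofInjective B₂ h₂).symm),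
    fun α => by simp only [LinearEquiv.trans_apply, LinearEquiv.ofInjective_symm_apply,
      LinearEquiv.coe_ofEq_apply, LinearEquiv.ofInjective_apply]⟩

theorem Module.Dual.apply_smul_eq_of_mem_span_singleton {k N : Type*} [Field k]
    [AddCommGroup N] [Module k N] {f : Dual k N} {x y : N} (hfx : f x = 1)
    (hy : y ∈ k ∙ x) : f y • x = y := by
  obtain ⟨c, rfl⟩ := Submodule.mem_span_singleton.mp hy
  rw [map_smul, hfx, smul_eq_mul, mul_one]

theorem exists_linearEquiv_of_pairings_into_lines {k F₁ F₂ M N₁ N₂ : Type*} [Field k]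
    [AddCommGroup F₁] [Module k F₁] [AddCommGroup F₂] [Module k F₂]
    [AddCommGroup M] [Module k M] [AddCommGroup N₁] [Module k N₁]
    [AddCommGroup N₂] [Module k N₂] [FiniteDimensional k F₁] [FiniteDimensional k F₂]
    (B₁ : F₁ →ₗ[k] M →ₗ[k] N₁) (B₂ : F₂ →ₗ[k] M →ₗ[k] N₂) {x₁ : N₁} {x₂ : N₂}
    (hx₁ : x₁ ≠ 0) (hx₂ : x₂ ≠ 0)
    (hB₁ : ∀ α m, B₁ α m ∈ k ∙ x₁) (hB₂ : ∀ β m, B₂ β m ∈ k ∙ x₂)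
    (h₁ : ∀ α, α ≠ 0 → ∃ m, B₁ α m ≠ 0) (h₂ : ∀ β, β ≠ 0 → ∃ m, B₂ β m ≠ 0)
    (h : ∀ m, (∀ α, B₁ α m = 0) ↔ ∀ β, B₂ β m = 0) :
    ∃ T : F₁ ≃ₗ[k] F₂, ∀ α m, B₁ α m = x₁ → B₂ (T α) m = x₂ := by
  obtain ⟨f₁, hf₁⟩ := Projective.exists_dual_eq_one k hx₁
  obtain ⟨f₂, hf₂⟩ := Projective.exists_dual_eq_one k hx₂
  have hcoord₁ : ∀ α m, f₁ (B₁ α m) • x₁ = B₁ α m := fun α m =>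
    Dual.apply_smul_eq_of_mem_span_singleton hf₁ (hB₁ α m)
  have hcoord₂ : ∀ β m, f₂ (B₂ β m) • x₂ = B₂ β m := fun β m =>
    Dual.apply_smul_eq_of_mem_span_singleton hf₂ (hB₂ β m)
  have hzero₁ : ∀ α m, f₁ (B₁ α m) = 0 ↔ B₁ α m = 0 := fun α m =>
    ⟨fun h0 => by rw [← hcoord₁, h0, zero_smul], fun h0 => by rw [h0, map_zero]⟩
  have hzero₂ : ∀ β m, f₂ (B₂ β m) = 0 ↔ B₂ β m = 0 := fun β m =>
    ⟨fun h0 => by rw [← hcoord₂, h0, zero_smul], fun h0 => by rw [h0, map_zero]⟩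
  obtain ⟨T, hT⟩ := Dual.exists_linearEquiv_of_injective_of_forall_apply_eq_zero_iff
    (B₁.compr₂ f₁) (B₂.compr₂ f₂)
    ((injective_iff_map_eq_zero _).mpr fun α hα => by
      by_contra hα0
      obtain ⟨m, hm⟩ := h₁ α hα0
      exact hm ((hzero₁ α m).mp (LinearMap.congr_fun hα m)))
    ((injective_iff_map_eq_zero _).mpr fun β hβ => by
      by_contra hβ0
      obtain ⟨m, hm⟩ := h₂ β hβ0
      exact hm ((hzero₂ β m).mp (LinearMap.congr_fun hβ m)))
    (fun m => by simpa only [LinearMap.compr₂_apply, hzero₁, hzero₂] using h m)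
  refine ⟨T, fun α m hαm => ?_⟩
  have h1 : f₂ (B₂ (T α) m) = 1 := by
    rw [← LinearMap.compr₂_apply, hT, LinearMap.compr₂_apply, hαm, hf₁]
  rw [← hcoord₂, h1, one_smul]

namespace NTranslation

namespace PathIn

variable {V : Type} {Arr : V → V → Type}

theorem length_comp {i j l : V} (p : PathIn Arr i j) (q : PathIn Arr j l) :
    (p.comp q).length = p.length + q.length := by
  induction q with
  | nil => simp only [comp, length, add_zero]
  | cons q a ih => simp only [comp, length, ih, add_assoc]

theorem eq_cons_nil_of_length_eq_one {i j : V} {p : PathIn Arr i j} (hp : p.length = 1) :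
    ∃ x : Arr i j, p = .cons (.nil i) x := by
  rcases p with _ | ⟨_ | ⟨q, y⟩, x⟩
  · simp [length] at hp
  · exact ⟨x, rfl⟩
  · simp [length] at hp

end PathIn

section Evaluation

variable {k : Type} [Field k] {V : Type} {Arr : V → V → Type}
  {A : Type} [Ring A] [Algebra k A] {e : V → A} {arr : ∀ i j, Arr i j → A}

theorem evalComb_eq_linearCombination {i j : V} (u : Comb k V Arr i j) :
    evalComb k V Arr A e arr u = Finsupp.linearCombination k (evalPath V Arr A e arr) u :=
  rfl

theorem evalArrComb_eq_linearCombination {i j : V} (w : Arr i j →₀ k) :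
    evalArrComb k V Arr A arr w = Finsupp.linearCombination k (arr i j) w :=
  rfl

theorem e_mul_arr (hidem : ∀ i, e i * e i = e i)
    (harr : ∀ (i j : V) (a : Arr i j), e j * arr i j a * e i = arr i j a)
    {i j : V} (a : Arr i j) : e j * arr i j a = arr i j a := by
  rw [← harr, ← mul_assoc, ← mul_assoc, hidem]

theorem arr_mul_e (hidem : ∀ i, e i * e i = e i)
    (harr : ∀ (i j : V) (a : Arr i j), e j * arr i j a * e i = arr i j a)
    {i j : V} (a : Arr i j) : arr i j a * e i = arr i j a := by
  rw [← harr, mul_assoc, hidem]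

theorem e_mul_evalPath (hidem : ∀ i, e i * e i = e i)
    (harr : ∀ (i j : V) (a : Arr i j), e j * arr i j a * e i = arr i j a)
    {i j : V} (p : PathIn Arr i j) : e j * evalPath V Arr A e arr p = evalPath V Arr A e arr p := by
  cases p with
  | nil => simp only [evalPath]; exact hidem _
  | cons q a => rw [evalPath, ← mul_assoc, e_mul_arr hidem harr]

theorem evalPath_comp (hidem : ∀ i, e i * e i = e i)
    (harr : ∀ (i j : V) (a : Arr i j), e j * arr i j a * e i = arr i j a)
    {i j l : V} (p : PathIn Arr i j) (q : PathIn Arr j l) :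
    evalPath V Arr A e arr (p.comp q) = evalPath V Arr A e arr q * evalPath V Arr A e arr p := by
  induction q with
  | nil => rw [PathIn.comp, evalPath, e_mul_evalPath hidem harr]
  | cons q a ih => rw [PathIn.comp, evalPath, evalPath, ih, mul_assoc]

theorem evalPath_cons_nil (hidem : ∀ i, e i * e i = e i)
    (harr : ∀ (i j : V) (a : Arr i j), e j * arr i j a * e i = arr i j a)
    {i j : V} (x : Arr i j) : evalPath V Arr A e arr (.cons (.nil i) x) = arr i j x := by
  simp only [evalPath]
  exact arr_mul_e hidem harr x

theorem mem_pathCornerSpan_iff {i j : V} {t : ℕ} {m : A} :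
    m ∈ pathCornerSpan k V Arr A e arr i j t ↔
      ∃ u : Comb k V Arr j i, (∀ p ∈ u.support, p.length = t) ∧
        evalComb k V Arr A e arr u = m := by
  change m ∈ Submodule.span k (evalPath V Arr A e arr '' {p | p.length = t}) ↔ _
  simp only [Finsupp.mem_span_image_iff_linearCombination, Finsupp.mem_supported,
    evalComb_eq_linearCombination]
  rfl

theorem evalPath_mem_pathCornerSpan {i j : V} {t : ℕ} {p : PathIn Arr j i} (hp : p.length = t) :
    evalPath V Arr A e arr p ∈ pathCornerSpan k V Arr A e arr i j t :=
  Submodule.subset_span ⟨p, hp, rfl⟩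

theorem evalArrComb_mem_pathCornerSpan (hidem : ∀ i, e i * e i = e i)
    (harr : ∀ (i j : V) (a : Arr i j), e j * arr i j a * e i = arr i j a)
    {i j : V} (w : Arr i j →₀ k) :
    evalArrComb k V Arr A arr w ∈ pathCornerSpan k V Arr A e arr j i 1 := by
  have hspan : Submodule.span k (Set.range (arr i j)) ≤ pathCornerSpan k V Arr A e arr j i 1 := by
    refine Submodule.span_le.mpr ?_
    rintro _ ⟨x, rfl⟩
    rw [← evalPath_cons_nil hidem harr]
    exact evalPath_mem_pathCornerSpan (by simp only [PathIn.length])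
  apply hspan
  rw [evalArrComb_eq_linearCombination, ← Finsupp.range_linearCombination]
  exact LinearMap.mem_range_self _ w

theorem mul_mem_pathCornerSpan (hidem : ∀ i, e i * e i = e i)
    (harr : ∀ (i j : V) (a : Arr i j), e j * arr i j a * e i = arr i j a)
    {i j l : V} {s t : ℕ} {x y : A} (hx : x ∈ pathCornerSpan k V Arr A e arr l j s)
    (hy : y ∈ pathCornerSpan k V Arr A e arr j i t) :
    x * y ∈ pathCornerSpan k V Arr A e arr l i (s + t) := by
  have hxy := Submodule.mul_mem_mul hx hy
  rw [pathCornerSpan, pathCornerSpan, Submodule.span_mul_span] at hxy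
  refine Submodule.span_mono ?_ hxy
  rintro _ ⟨_, ⟨p, rfl, rfl⟩, _, ⟨q, rfl, rfl⟩, rfl⟩
  refine ⟨q.comp p, ?_, evalPath_comp hidem harr q p⟩
  rw [PathIn.length_comp, add_comm]

theorem extendedRelations_le_supported {ρ : ∀ i j : V, Set (Comb k V Arr i j)}
    (hhomog : ∀ (i j : V), ∀ r ∈ ρ i j, ∃ t : ℕ, 2 ≤ t ∧ ∀ p ∈ r.support, PathIn.length p = t)
    (i j : V) :
    extendedRelations k V Arr ρ i j ≤ Finsupp.supported k k {p | 2 ≤ p.length} := by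
  classical
  refine Submodule.span_le.mpr ?_
  rintro _ ⟨a, b, r, hr, v, w, rfl⟩ p hp
  obtain ⟨q, hq, rfl⟩ := Finset.mem_image.mp (Finsupp.mapDomain_support hp)
  obtain ⟨t, ht, hlen⟩ := hhomog a b r hr
  simp only [Set.mem_ofPred_eq, PathIn.length_comp, hlen q hq]
  omega

theorem IsBoundQuiverAlgebra.linearIndependent_arr {ρ : ∀ i j : V, Set (Comb k V Arr i j)}
    (hpres : IsBoundQuiverAlgebra k V Arr A e arr ρ) (i j : V) :
    LinearIndependent k (arr i j) := by
  classical
  have hcons : Function.Injective (fun x : Arr i j => PathIn.cons (PathIn.nil i) x) :=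
    fun x y hxy => eq_of_heq (PathIn.cons.inj hxy).2.2
  refine linearIndependent_iff.mpr fun w hw => Finsupp.mapDomain_injective hcons ?_
  set u := w.mapDomain (fun x : Arr i j => PathIn.cons (PathIn.nil i) x)
  have hu_eval : evalComb k V Arr A e arr u = 0 := by
    rw [evalComb_eq_linearCombination, Finsupp.linearCombination_mapDomain, ← hw]
    congr 2
    funext x
    exact evalPath_cons_nil hpres.idem hpres.arr_comp x
  have hu_long : u ∈ Finsupp.supported k k {p : PathIn Arr i j | 2 ≤ p.length} :=
    extendedRelations_le_supported hpres.homog i j ((hpres.kernel i j u).mp hu_eval)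
  have hu_short : u ∈ Finsupp.supported k k {p : PathIn Arr i j | p.length = 1} := by
    intro p hp
    obtain ⟨x, -, rfl⟩ := Finset.mem_image.mp (Finsupp.mapDomain_support hp)
    simp only [Set.mem_ofPred_eq, PathIn.length]
  have hdisj : Disjoint {p : PathIn Arr i j | 2 ≤ p.length} {p | p.length = 1} :=
    Set.disjoint_left.mpr fun p h2 h1 => by
      simp only [Set.mem_ofPred_eq] at h1 h2
      omega
  rw [Finsupp.mapDomain_zero]
  exact Submodule.disjoint_def.mp (Finsupp.disjoint_supported_supported hdisj) u hu_long hu_short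

end Evaluation

section TranslationQuiver

variable {k : Type} [Field k] {V : Type} {Arr : V → V → Type}
  {A : Type} [Ring A] [Algebra k A] {e : V → A} {arr : ∀ i j, Arr i j → A}
  {n : ℕ} {P I : Set V} {τ : V → V}

namespace IsNTranslationQuiver

theorem exists_mul_evalPath_ne_zero (htr : IsNTranslationQuiver k V Arr A e arr n P I τ)
    {i j : V} (hi : i ∉ P) {t : ℕ} (ht : t ≤ n + 1) {m : A}
    (hm : m ∈ pathCornerSpan k V Arr A e arr i j t) (hm0 : m ≠ 0) :
    ∃ q : PathIn Arr (τ i) j, q.length + t = n + 1 ∧ m * evalPath V Arr A e arr q ≠ 0 := by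
  obtain ⟨u, hu, rfl⟩ := mem_pathCornerSpan_iff.mp hm
  exact htr.cond3 i hi j t ht u ⟨hu, hm0⟩

theorem exists_evalPath_mul_ne_zero (htr : IsNTranslationQuiver k V Arr A e arr n P I τ)
    {i j : V} (hi : i ∉ P) {t : ℕ} (ht : t ≤ n + 1) {m : A}
    (hm : m ∈ pathCornerSpan k V Arr A e arr j (τ i) t) (hm0 : m ≠ 0) :
    ∃ p : PathIn Arr j i, p.length + t = n + 1 ∧ evalPath V Arr A e arr p * m ≠ 0 := by
  obtain ⟨u, hu, rfl⟩ := mem_pathCornerSpan_iff.mp hm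
  obtain ⟨i', hi', hτ, hp⟩ := htr.cond4 (τ i) (htr.bij.mapsTo hi) j t ht u ⟨hu, hm0⟩
  obtain rfl := htr.bij.injOn hi' hi hτ
  exact hp

theorem pathCornerSpan_le_span_singleton (htr : IsNTranslationQuiver k V Arr A e arr n P I τ)
    {i : V} (hi : i ∉ P) {x : PathIn Arr (τ i) i} (hx : x.length = n + 1)
    (hx0 : evalPath V Arr A e arr x ≠ 0) :
    pathCornerSpan k V Arr A e arr i (τ i) (n + 1) ≤ k ∙ evalPath V Arr A e arr x := by
  refine Submodule.span_le.mpr ?_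
  rintro _ ⟨p, hp, rfl⟩
  obtain ⟨c, d, hcd, hdep⟩ := htr.lin_dep i hi p x hp hx
  have hdep' : ¬ LinearIndependent k ![evalPath V Arr A e arr x, evalPath V Arr A e arr p] := by
    rw [LinearIndependent.pair_symm_iff, LinearIndependent.pair_iff]
    exact fun h => hcd (h c d hdep)
  rw [LinearIndependent.pair_iff' hx0, not_forall_not] at hdep'
  exact Submodule.mem_span_singleton.mpr hdep'

variable {ρ : ∀ i j : V, Set (Comb k V Arr i j)}

theorem exists_evalArrComb_mul_evalPath_ne_zero
    (htr : IsNTranslationQuiver k V Arr A e arr n P I τ)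
    (hpres : IsBoundQuiverAlgebra k V Arr A e arr ρ) {a j : V} (hj : j ∉ P)
    {w : Arr a j →₀ k} (hw : w ≠ 0) :
    ∃ q : PathIn Arr (τ j) a, q.length = n ∧
      evalArrComb k V Arr A arr w * evalPath V Arr A e arr q ≠ 0 := by
  have hw' : evalArrComb k V Arr A arr w ≠ 0 := fun h =>
    hw (linearIndependent_iff.mp (hpres.linearIndependent_arr a j) w h)
  obtain ⟨q, hq, hne⟩ := htr.exists_mul_evalPath_ne_zero hj (by omega)
    (evalArrComb_mem_pathCornerSpan hpres.idem hpres.arr_comp w) hw'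
  exact ⟨q, by omega, hne⟩

theorem exists_evalPath_mul_evalArrComb_ne_zero
    (htr : IsNTranslationQuiver k V Arr A e arr n P I τ)
    (hpres : IsBoundQuiverAlgebra k V Arr A e arr ρ) {i b : V} (hi : i ∉ P)
    {w : Arr (τ i) b →₀ k} (hw : w ≠ 0) :
    ∃ p : PathIn Arr b i, p.length = n ∧
      evalPath V Arr A e arr p * evalArrComb k V Arr A arr w ≠ 0 := by
  have hw' : evalArrComb k V Arr A arr w ≠ 0 := fun h =>
    hw (linearIndependent_iff.mp (hpres.linearIndependent_arr (τ i) b) w h)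
  obtain ⟨p, hp, hne⟩ := htr.exists_evalPath_mul_ne_zero hi (by omega)
    (evalArrComb_mem_pathCornerSpan hpres.idem hpres.arr_comp w) hw'
  exact ⟨p, by omega, hne⟩

theorem evalArrComb_mul_mem_span_singleton
    (htr : IsNTranslationQuiver k V Arr A e arr n P I τ)
    (hpres : IsBoundQuiverAlgebra k V Arr A e arr ρ) {a j : V} (hj : j ∉ P)
    {x : PathIn Arr (τ j) j} (hx : x.length = n + 1) (hx0 : evalPath V Arr A e arr x ≠ 0)
    (w : Arr a j →₀ k) {m : A} (hm : m ∈ pathCornerSpan k V Arr A e arr a (τ j) n) :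
    evalArrComb k V Arr A arr w * m ∈ k ∙ evalPath V Arr A e arr x := by
  refine htr.pathCornerSpan_le_span_singleton hj hx hx0 ?_
  rw [add_comm]
  exact mul_mem_pathCornerSpan hpres.idem hpres.arr_comp
    (evalArrComb_mem_pathCornerSpan hpres.idem hpres.arr_comp w) hm

theorem mul_evalArrComb_mem_span_singleton
    (htr : IsNTranslationQuiver k V Arr A e arr n P I τ)
    (hpres : IsBoundQuiverAlgebra k V Arr A e arr ρ) {i b : V} (hi : i ∉ P)
    {x : PathIn Arr (τ i) i} (hx : x.length = n + 1) (hx0 : evalPath V Arr A e arr x ≠ 0)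
    (w : Arr (τ i) b →₀ k) {m : A} (hm : m ∈ pathCornerSpan k V Arr A e arr i b n) :
    m * evalArrComb k V Arr A arr w ∈ k ∙ evalPath V Arr A e arr x :=
  htr.pathCornerSpan_le_span_singleton hi hx hx0 (mul_mem_pathCornerSpan hpres.idem
    hpres.arr_comp hm (evalArrComb_mem_pathCornerSpan hpres.idem hpres.arr_comp w))

theorem eq_zero_of_forall_evalArrComb_mul_eq_zero
    (htr : IsNTranslationQuiver k V Arr A e arr n P I τ)
    (hpres : IsBoundQuiverAlgebra k V Arr A e arr ρ) {a j : V} (hj : j ∉ P) {m : A}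
    (hm : m ∈ pathCornerSpan k V Arr A e arr a (τ j) n)
    (h : ∀ w : Arr a j →₀ k, evalArrComb k V Arr A arr w * m = 0) : m = 0 := by
  by_contra hm0
  obtain ⟨p, hp, hne⟩ := htr.exists_evalPath_mul_ne_zero hj (by omega) hm hm0
  obtain ⟨x, rfl⟩ := PathIn.eq_cons_nil_of_length_eq_one (by omega : p.length = 1)
  rw [evalPath_cons_nil hpres.idem hpres.arr_comp] at hne
  simpa [evalArrComb_eq_linearCombination, hne] using h (Finsupp.single x 1)

theorem eq_zero_of_forall_mul_evalArrComb_eq_zero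
    (htr : IsNTranslationQuiver k V Arr A e arr n P I τ)
    (hpres : IsBoundQuiverAlgebra k V Arr A e arr ρ) {i b : V} (hi : i ∉ P) {m : A}
    (hm : m ∈ pathCornerSpan k V Arr A e arr i b n)
    (h : ∀ w : Arr (τ i) b →₀ k, m * evalArrComb k V Arr A arr w = 0) : m = 0 := by
  by_contra hm0
  obtain ⟨q, hq, hne⟩ := htr.exists_mul_evalPath_ne_zero hi (by omega) hm hm0
  obtain ⟨x, rfl⟩ := PathIn.eq_cons_nil_of_length_eq_one (by omega : q.length = 1)
  rw [evalPath_cons_nil hpres.idem hpres.arr_comp] at hne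
  simpa [evalArrComb_eq_linearCombination, hne] using h (Finsupp.single x 1)

end IsNTranslationQuiver

end TranslationQuiver

end NTranslation

open NTranslation in
/-- **Lemma `exttra`.**  Let `Q` be an `n`-translation quiver
with translation `τ`, let `Λ = k(Q)`, and for each `i ∉ 𝒫` fix a bound path
`p_i` of length `n+1` from `τ i` to `i`.  Then for any non-projective `i, j`
there is an isomorphism of vector spaces
`τ(i,j) : e_j kQ₁ e_i → e_{τj} kQ₁ e_{τi}` such that for any path `p` of
length `n` and any `α ∈ e_j kQ₁ e_i` satisfying `αp = p_j` in `Λ`, one has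
`p·τ(i,j)(α) = p_i` in `Λ`. -/
theorem arrow_space_translation_isomorphism
    (k : Type) [Field k] (V : Type) (Arr : V → V → Type)
    (A : Type) [Ring A] [Algebra k A]
    (e : V → A) (arr : ∀ i j : V, Arr i j → A)
    (ρ : ∀ i j : V, Set (Comb k V Arr i j))
    (hpres : IsBoundQuiverAlgebra k V Arr A e arr ρ)
    (n : ℕ) (P I : Set V) (τ : V → V)
    (htr : IsNTranslationQuiver k V Arr A e arr n P I τ)
    (pfix : ∀ i : V, i ∉ P → PathIn Arr (τ i) i)
    (hpfix : ∀ (i : V) (hi : i ∉ P), (pfix i hi).length = n + 1 ∧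
      evalPath V Arr A e arr (pfix i hi) ≠ 0) :
    ∀ (i j : V) (hi : i ∉ P) (hj : j ∉ P),
      ∃ T : (Arr i j →₀ k) ≃ₗ[k] (Arr (τ i) (τ j) →₀ k),
        ∀ (α : Arr i j →₀ k) (p : PathIn Arr (τ j) i), p.length = n →
          evalArrComb k V Arr A arr α * evalPath V Arr A e arr p =
            evalPath V Arr A e arr (pfix j hj) →
          evalPath V Arr A e arr p * evalArrComb k V Arr A arr (T α) =
            evalPath V Arr A e arr (pfix i hi) := by
  intro i j hi hj
  have := hpres.locFin i j
  have := hpres.locFin (τ i) (τ j)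
  let M := pathCornerSpan k V Arr A e arr i (τ j) n
  obtain ⟨T, hT⟩ := exists_linearEquiv_of_pairings_into_lines
    ((LinearMap.mul k A).compl₁₂ (Finsupp.linearCombination k (arr i j)) M.subtype)
    ((LinearMap.mul k A).flip.compl₁₂ (Finsupp.linearCombination k (arr (τ i) (τ j))) M.subtype)
    (hpfix j hj).2 (hpfix i hi).2
    (fun α m => htr.evalArrComb_mul_mem_span_singleton hpres hj (hpfix j hj).1 (hpfix j hj).2 α m.2)
    (fun β m => htr.mul_evalArrComb_mem_span_singleton hpres hi (hpfix i hi).1 (hpfix i hi).2 β m.2)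
    (fun α hα => by
      obtain ⟨q, hq, hne⟩ := htr.exists_evalArrComb_mul_evalPath_ne_zero hpres hj hα
      exact ⟨⟨_, evalPath_mem_pathCornerSpan hq⟩, hne⟩)
    (fun β hβ => by
      obtain ⟨p, hp, hne⟩ := htr.exists_evalPath_mul_evalArrComb_ne_zero hpres hi hβ
      exact ⟨⟨_, evalPath_mem_pathCornerSpan hp⟩, hne⟩)
    (fun m => ⟨fun h β => by
        simp [htr.eq_zero_of_forall_evalArrComb_mul_eq_zero hpres hj m.2 h],
      fun h α => by
        simp [htr.eq_zero_of_forall_mul_evalArrComb_eq_zero hpres hi m.2 h]⟩)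
  exact ⟨T, fun α p hp => hT α ⟨_, evalPath_mem_pathCornerSpan hp⟩⟩
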